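/- (Corollary 5) Let L be a finite-dimensional left Leibniz algebra over a field k of characteristic 0, let R be the radical of L and N the nilradical of L. Then [R, R] ⊆ N; in particular the ideal [R,R] is nilpotent. -/

import Mathlib

/-
Basic notions for (left) Leibniz algebras, given by a bilinear bracket
`β : M →ₗ[k] M →ₗ[k] M` on a `k`-vector space `M`.
-/

section LeibnizDefs

variable {k : Type*} [Field k] {M : Type*} [AddCommGroup M] [Module k M]

/-- `[A, B]`: the linear span of brackets of elements of two subspaces. -/
def bracketSpan (β : M →ₗ[k] M →ₗ[k] M) (A B : Submodule k M) : Submodule k M :=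
  Submodule.span k {z : M | ∃ a ∈ A, ∃ b ∈ B, z = β a b}

/-- Derived series of a subspace `I`: `D^0 = I`, `D^{n+1} = [D^n, D^n]`. -/
def derivedSeriesOf (β : M →ₗ[k] M →ₗ[k] M) (I : Submodule k M) : ℕ → Submodule k M
  | 0 => I
  | n + 1 => bracketSpan β (derivedSeriesOf β I n) (derivedSeriesOf β I n)

/-- Lower central series of a subspace `I`: `C^0 = I`, `C^{n+1} = [I, C^n]`. -/
def lowerCentralSeriesOf (β : M →ₗ[k] M →ₗ[k] M) (I : Submodule k M) : ℕ → Submodule k M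
  | 0 => I
  | n + 1 => bracketSpan β I (lowerCentralSeriesOf β I n)

/-- A two-sided ideal. -/
def LeibnizIdeal (β : M →ₗ[k] M →ₗ[k] M) (I : Submodule k M) : Prop :=
  (∀ x : M, ∀ u ∈ I, β x u ∈ I) ∧ (∀ u ∈ I, ∀ x : M, β u x ∈ I)

/-- A subspace is solvable if its derived series reaches `0`. -/
def LeibnizSolvable (β : M →ₗ[k] M →ₗ[k] M) (I : Submodule k M) : Prop :=
  ∃ n, derivedSeriesOf β I n = ⊥

/-- A subspace is nilpotent if its lower central series reaches `0`. -/
def LeibnizNilpotent (β : M →ₗ[k] M →ₗ[k] M) (I : Submodule k M) : Prop :=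
  ∃ n, lowerCentralSeriesOf β I n = ⊥

/-- A subalgebra: a subspace closed under the bracket. -/
def LeibnizSubalgebra (β : M →ₗ[k] M →ₗ[k] M) (S : Submodule k M) : Prop :=
  ∀ u ∈ S, ∀ v ∈ S, β u v ∈ S

end LeibnizDefs

/-!
Left multiplication `x ↦ β x` sends the left Leibniz bracket to the commutator bracket of
`End k L`, so the image `g` of a solvable subalgebra `S` is a solvable Lie subalgebra of
`𝔤𝔩(L)`, and the image of `[S, S]` lies in `⁅g, g⁆`. Over an algebraic closure, Lie's theorem
gives a nonzero weight space, which `⁅g, g⁆` annihilates; inducting on the quotient, every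
element of `⁅g, g⁆` acts nilpotently, and Engel's theorem makes `L` a nilpotent
`⁅g, g⁆`-module. This forces the lower central series of `[S, S]` to vanish. For the radical
`R`, `[R, R]` is moreover an ideal, so it lies in the nilradical.
-/

open LieAlgebra

lemma Module.End.isNilpotent_of_isNilpotent_quotient {R M : Type*} [Ring R] [AddCommGroup M]
    [Module R M] {f : Module.End R M} {p : Submodule R M} {g : Module.End R (M ⧸ p)}
    (hg : g ∘ₗ p.mkQ = p.mkQ ∘ₗ f) (hpf : p ≤ LinearMap.ker f) (hnil : IsNilpotent g) :
    IsNilpotent f := by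
  obtain ⟨n, hn⟩ := hnil
  refine ⟨n + 1, LinearMap.ext fun m ↦ ?_⟩
  have hm : (f ^ n) m ∈ p := by
    rw [← Submodule.Quotient.mk_eq_zero, ← Submodule.mkQ_apply, ← LinearMap.comp_apply,
      ← Module.End.commute_pow_left_of_commute hg, hn]
    rfl
  rw [pow_succ', Module.End.mul_apply]
  exact hpf hm

namespace LieModule

variable {K L M : Type*} [Field K] [LieRing L] [LieAlgebra K L]
  [AddCommGroup M] [Module K M] [LieRingModule L M] [LieModule K L M]

lemma derivedSeries_one_le_ker_weightSpace (χ : L → K) :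
    derivedSeries K L 1 ≤ LieModule.ker K L (weightSpace M χ) := by
  rw [derivedSeries_def, derivedSeriesOfIdeal_succ, derivedSeriesOfIdeal_zero,
    LieSubmodule.lie_le_iff]
  rintro a - b -
  rw [LieModule.mem_ker]
  rintro ⟨w, hw⟩
  rw [mem_weightSpace] at hw
  ext
  simp [lie_lie, hw, smul_comm (χ a) (χ b)]

lemma isNilpotent_toEnd_of_mem_derivedSeries_one_of_isAlgClosed [CharZero K] [IsAlgClosed K]
    [IsSolvable L] [FiniteDimensional K M] {x : L} (hx : x ∈ derivedSeries K L 1) :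
    _root_.IsNilpotent (toEnd K L M x) := by
  induction h : Module.finrank K M using Nat.strong_induction_on generalizing M with
  | _ n ih =>
  rcases subsingleton_or_nontrivial M with _ | _
  · exact ⟨1, Subsingleton.elim _ _⟩
  obtain ⟨χ, _⟩ := exists_nontrivial_weightSpace_of_isSolvable K L M
  have hker := derivedSeries_one_le_ker_weightSpace (M := M) χ hx
  rw [LieModule.mem_ker] at hker
  have hlt : Module.finrank K (M ⧸ weightSpace M χ) < n := by
    have hsum : Module.finrank K (M ⧸ weightSpace M χ) + Module.finrank K (weightSpace M χ)
        = n := h ▸ Submodule.finrank_quotient_add_finrank _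
    have : 0 < Module.finrank K (weightSpace M χ) := Module.finrank_pos
    omega
  refine Module.End.isNilpotent_of_isNilpotent_quotient
    (LieSubmodule.Quotient.toEnd_comp_mk' _ x) (fun w hw ↦ ?_) (ih _ hlt rfl)
  simpa using congr_arg Subtype.val (hker ⟨w, hw⟩)

open scoped TensorProduct in
theorem isNilpotent_derivedSeries_one_of_isSolvable [CharZero K] [IsSolvable L]
    [FiniteDimensional K M] : IsNilpotent (derivedSeries K L 1) M := by
  set A := AlgebraicClosure K
  rw [isNilpotent_iff_forall' (R := K)]
  rintro ⟨x, hx⟩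
  have hx_ext : 1 ⊗ₜ[K] x ∈ derivedSeries A (A ⊗[K] L) 1 := by
    rw [derivedSeries_baseChange]
    exact Submodule.tmul_mem_baseChange_of_mem 1 hx
  have hinj : Function.Injective (Module.End.baseChangeHom K A M) :=
    LinearMap.baseChangeHom_injective K M A
  rw [← IsNilpotent.map_iff hinj]
  change _root_.IsNilpotent ((toEnd K L M x).baseChange A)
  rw [← toEnd_baseChange]
  exact isNilpotent_toEnd_of_mem_derivedSeries_one_of_isAlgClosed hx_ext

end LieModule

section Leibniz

variable {k : Type*} [Field k] {L : Type*} [AddCommGroup L] [Module k L]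
  {β : L →ₗ[k] L →ₗ[k] L}

lemma mem_bracketSpan {A B : Submodule k L} {a b : L} (ha : a ∈ A) (hb : b ∈ B) :
    β a b ∈ bracketSpan β A B :=
  Submodule.subset_span ⟨a, ha, b, hb, rfl⟩

lemma bracketSpan_le_iff {A B C : Submodule k L} :
    bracketSpan β A B ≤ C ↔ ∀ a ∈ A, ∀ b ∈ B, β a b ∈ C := by
  refine ⟨fun h a ha b hb ↦ h (mem_bracketSpan ha hb), fun h ↦ Submodule.span_le.2 ?_⟩
  rintro _ ⟨a, ha, b, hb, rfl⟩
  exact h a ha b hb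

lemma LeibnizIdeal.leibnizSubalgebra {I : Submodule k L} (hI : LeibnizIdeal β I) :
    LeibnizSubalgebra β I :=
  fun a ha b _ ↦ hI.2 a ha b

lemma LeibnizIdeal.bracketSpan_self
    (leib : ∀ x y z : L, β x (β y z) = β (β x y) z + β y (β x z))
    {I : Submodule k L} (hI : LeibnizIdeal β I) : LeibnizIdeal β (bracketSpan β I I) := by
  constructor
  · intro x u hu
    refine (bracketSpan_le_iff (C := (bracketSpan β I I).comap (β x))).2 ?_ hu
    intro a ha b hb
    rw [Submodule.mem_comap, leib]
    exact add_mem (mem_bracketSpan (hI.1 x a ha) hb) (mem_bracketSpan ha (hI.1 x b hb))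
  · intro u hu x
    refine (bracketSpan_le_iff (C := (bracketSpan β I I).comap (β.flip x))).2 ?_ hu
    intro a ha b hb
    rw [Submodule.mem_comap, LinearMap.flip_apply, eq_sub_of_add_eq (leib a b x).symm]
    exact sub_mem (mem_bracketSpan ha (hI.2 b hb x)) (mem_bracketSpan hb (hI.2 a ha x))

end Leibniz

section Adjoint

attribute [local instance] LieRing.ofAssociativeRing

variable {k : Type*} [Field k] {L : Type*} [AddCommGroup L] [Module k L]
  {β : L →ₗ[k] L →ₗ[k] L}

lemma apply_bracket_eq_lie (leib : ∀ x y z : L, β x (β y z) = β (β x y) z + β y (β x z))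
    (x y : L) : β (β x y) = ⁅β x, β y⁆ := by
  ext z
  rw [Ring.lie_def, LinearMap.sub_apply, Module.End.mul_apply, Module.End.mul_apply, leib]
  abel

def adSubalgebra (leib : ∀ x y z : L, β x (β y z) = β (β x y) z + β y (β x z))
    (S : Submodule k L) (hS : LeibnizSubalgebra β S) : LieSubalgebra k (Module.End k L) :=
  { S.map β with
    lie_mem' := by
      rintro _ _ ⟨a, ha, rfl⟩ ⟨b, hb, rfl⟩
      exact ⟨β a b, hS a ha b hb, apply_bracket_eq_lie leib a b⟩ }

lemma coe_mem_map_derivedSeriesOf_of_mem_derivedSeries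
    (leib : ∀ x y z : L, β x (β y z) = β (β x y) z + β y (β x z))
    {S : Submodule k L} (hS : LeibnizSubalgebra β S) (n : ℕ) {x : adSubalgebra leib S hS}
    (hx : x ∈ derivedSeries k (adSubalgebra leib S hS) n) :
    (x : Module.End k L) ∈ (derivedSeriesOf β S n).map β := by
  induction n generalizing x with
  | zero => exact x.2
  | succ n ih =>
    rw [derivedSeries_def, derivedSeriesOfIdeal_succ, ← LieSubmodule.mem_toSubmodule,
      LieSubmodule.lieIdeal_oper_eq_linear_span] at hx
    induction hx using Submodule.span_induction with
    | mem y hy =>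
      obtain ⟨⟨a, ha⟩, ⟨b, hb⟩, rfl⟩ := hy
      obtain ⟨a', ha', haa'⟩ := ih ha
      obtain ⟨b', hb', hbb'⟩ := ih hb
      refine ⟨β a' b', mem_bracketSpan ha' hb', ?_⟩
      rw [apply_bracket_eq_lie leib, haa', hbb']
      rfl
    | zero => exact zero_mem _
    | add y z _ _ hy hz => exact add_mem hy hz
    | smul c y _ hy => exact Submodule.smul_mem _ c hy

lemma isSolvable_adSubalgebra (leib : ∀ x y z : L, β x (β y z) = β (β x y) z + β y (β x z))
    {S : Submodule k L} (hS : LeibnizSubalgebra β S) (hsolv : LeibnizSolvable β S) :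
    IsSolvable (adSubalgebra leib S hS) := by
  obtain ⟨n, hn⟩ := hsolv
  refine (isSolvable_iff k _).2 ⟨n, eq_bot_iff.2 fun x hx ↦ ?_⟩
  have hx0 := coe_mem_map_derivedSeriesOf_of_mem_derivedSeries leib hS n hx
  rw [hn, Submodule.map_bot, Submodule.mem_bot] at hx0
  exact (LieSubmodule.mem_bot x).2 (Subtype.ext hx0)

lemma exists_mem_derivedSeries_one_coe_eq
    (leib : ∀ x y z : L, β x (β y z) = β (β x y) z + β y (β x z))
    {S : Submodule k L} (hS : LeibnizSubalgebra β S) {a : L} (ha : a ∈ bracketSpan β S S) :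
    ∃ x ∈ derivedSeries k (adSubalgebra leib S hS) 1, (x : Module.End k L) = β a := by
  set g := adSubalgebra leib S hS
  suffices bracketSpan β S S ≤
      ((derivedSeries k g 1 : Submodule k g).map (g.incl : g →ₗ[k] Module.End k L)).comap β from
    this ha
  refine bracketSpan_le_iff.2 fun a ha b hb ↦
    ⟨⁅(⟨β a, a, ha, rfl⟩ : g), ⟨β b, b, hb, rfl⟩⁆, ?_, (apply_bracket_eq_lie leib a b).symm⟩
  rw [derivedSeries_def, derivedSeriesOfIdeal_succ, derivedSeriesOfIdeal_zero]
  exact LieSubmodule.lie_mem_lie (LieSubmodule.mem_top _) (LieSubmodule.mem_top _)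

open LieModule in
theorem leibnizNilpotent_bracketSpan_of_leibnizSolvable [CharZero k] [FiniteDimensional k L]
    (leib : ∀ x y z : L, β x (β y z) = β (β x y) z + β y (β x z))
    {S : Submodule k L} (hS : LeibnizSubalgebra β S) (hsolv : LeibnizSolvable β S) :
    LeibnizNilpotent β (bracketSpan β S S) := by
  set g := adSubalgebra leib S hS
  have := isSolvable_adSubalgebra leib hS hsolv
  obtain ⟨n, hn⟩ := (isNilpotent_iff k (derivedSeries k g 1) L).1
    isNilpotent_derivedSeries_one_of_isSolvable
  have hle : ∀ m, lowerCentralSeriesOf β (bracketSpan β S S) m ≤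
      (lowerCentralSeries k (derivedSeries k g 1) L m : Submodule k L) := by
    intro m
    induction m with
    | zero => exact le_top
    | succ m ih =>
      refine bracketSpan_le_iff.2 fun a ha u hu ↦ ?_
      obtain ⟨x, hx, hxa⟩ := exists_mem_derivedSeries_one_coe_eq leib hS ha
      rw [lowerCentralSeries_succ, ← hxa]
      exact LieSubmodule.lie_mem_lie (x := (⟨x, hx⟩ : derivedSeries k g 1))
        (LieSubmodule.mem_top _) (ih hu)
  exact ⟨n, eq_bot_iff.2 (by simpa [hn] using hle n)⟩

end Adjoint

theorem stmt_14_general {k : Type*} [Field k] [CharZero k] {L : Type*} [AddCommGroup L] [Module k L]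
    [FiniteDimensional k L] (β : L →ₗ[k] L →ₗ[k] L)
    (leib : ∀ x y z : L, β x (β y z) = β (β x y) z + β y (β x z))
    (R : Submodule k L) (hRid : LeibnizIdeal β R) (hRsolv : LeibnizSolvable β R)
    (N : Submodule k L)
    (hNmax : ∀ I : Submodule k L, LeibnizIdeal β I → LeibnizNilpotent β I → I ≤ N) :
    bracketSpan β R R ≤ N ∧ LeibnizNilpotent β (bracketSpan β R R) := by
  have hnil := leibnizNilpotent_bracketSpan_of_leibnizSolvable leib hRid.leibnizSubalgebra hRsolv
  exact ⟨hNmax _ (hRid.bracketSpan_self leib) hnil, hnil⟩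

/-- `[R,R] ⊆ N`; in particular the ideal `[R,R]` is nilpotent. -/
theorem stmt_14 {k : Type*} [Field k] [CharZero k] {L : Type*} [AddCommGroup L] [Module k L]
    [FiniteDimensional k L] (β : L →ₗ[k] L →ₗ[k] L)
    (leib : ∀ x y z : L, β x (β y z) = β (β x y) z + β y (β x z))
    (R : Submodule k L) (hRid : LeibnizIdeal β R) (hRsolv : LeibnizSolvable β R)
    (hRmax : ∀ I : Submodule k L, LeibnizIdeal β I → LeibnizSolvable β I → I ≤ R)
    (N : Submodule k L) (hNid : LeibnizIdeal β N) (hNnil : LeibnizNilpotent β N)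
    (hNmax : ∀ I : Submodule k L, LeibnizIdeal β I → LeibnizNilpotent β I → I ≤ N) :
    bracketSpan β R R ≤ N ∧ LeibnizNilpotent β (bracketSpan β R R) :=
  stmt_14_general β leib R hRid hRsolv N hNmax
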